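/- arXiv:2602.00874 — 3 statements merged into one kernel-verified Lean document; each statement's English description precedes it below -/
import Mathlib

section
/- Let x ∈ ℝ^s and U₂ ∈ ℝ^{n×s} with U₂ᵀU₂ invertible, and suppose xᵀ(U₂ᵀU₂)^{-1}x ≤ ε² for some ε ∈ (0,1). Then for any U₁ ∈ ℝ^{n×s}, we have ‖U₁x‖₂ ≤ ε · ‖U₁U₂ᵀ‖. -/
/-! Since `U₂ᵀU₂` is invertible, `x = U₂ᵀ w` for `w = U₂ (U₂ᵀU₂)⁻¹ x`, and `‖w‖₂² = xᵀ(U₂ᵀU₂)⁻¹x ≤ ε²`.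
Hence `U₁ x = (U₁U₂ᵀ) w` has norm at most `‖U₁U₂ᵀ‖ ‖w‖₂ ≤ ε ‖U₁U₂ᵀ‖`. -/

open scoped Matrix

/-- Spectral (ℓ2 operator) norm of a real matrix. -/
noncomputable def spec {m n : Type*} [Fintype m] [Fintype n] [DecidableEq n]
    (A : Matrix m n ℝ) : ℝ :=
  ‖(Matrix.toEuclideanLin A).toContinuousLinearMap‖

/-- Frobenius norm of a real matrix. -/
noncomputable def frob {m n : Type*} [Fintype m] [Fintype n] (A : Matrix m n ℝ) : ℝ :=
  Real.sqrt (∑ i, ∑ j, (A i j)^2)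

/-- Euclidean norm of a real vector. -/
noncomputable def vnorm {n : Type*} [Fintype n] (x : n → ℝ) : ℝ :=
  Real.sqrt (∑ i, x i^2)

lemma spec_nonneg {m n : Type*} [Fintype m] [Fintype n] [DecidableEq n] (A : Matrix m n ℝ) :
    0 ≤ spec A :=
  norm_nonneg _

lemma vnorm_eq_norm_toLp {n : Type*} [Fintype n] (x : n → ℝ) :
    vnorm x = ‖WithLp.toLp 2 x‖ := by
  simp [EuclideanSpace.norm_eq, vnorm]

lemma vnorm_eq_sqrt_dotProduct {n : Type*} [Fintype n] (x : n → ℝ) :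
    vnorm x = √(x ⬝ᵥ x) := by
  simp [vnorm, dotProduct, sq]

lemma vnorm_mulVec_le {m n : Type*} [Fintype m] [Fintype n] [DecidableEq n]
    (A : Matrix m n ℝ) (v : n → ℝ) : vnorm (A *ᵥ v) ≤ spec A * vnorm v := by
  simpa [vnorm_eq_norm_toLp, spec] using
    (Matrix.toEuclideanLin A).toContinuousLinearMap.le_opNorm (WithLp.toLp 2 v)

lemma exists_transpose_mulVec_eq_dotProduct_self_eq {m n : Type*} [Fintype m] [Fintype n]
    [DecidableEq n] (B : Matrix m n ℝ) (hB : IsUnit (Bᵀ * B).det) (x : n → ℝ) :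
    ∃ w, Bᵀ *ᵥ w = x ∧ w ⬝ᵥ w = x ⬝ᵥ (Bᵀ * B)⁻¹ *ᵥ x := by
  have hw : Bᵀ *ᵥ (B *ᵥ ((Bᵀ * B)⁻¹ *ᵥ x)) = x := by
    rw [Matrix.mulVec_mulVec, Matrix.mulVec_mulVec, Matrix.mul_nonsing_inv _ hB, Matrix.one_mulVec]
  refine ⟨B *ᵥ ((Bᵀ * B)⁻¹ *ᵥ x), hw, ?_⟩
  rw [Matrix.dotProduct_mulVec, ← Matrix.mulVec_transpose, hw]

/-- If `x ∈ ℝ^s`, `U₂ ∈ ℝ^{n×s}` with `U₂ᵀU₂` invertible and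
`xᵀ(U₂ᵀU₂)⁻¹x ≤ ε²` for some `ε ∈ (0,1)`, then for any `U₁ ∈ ℝ^{n×s}`,
`‖U₁ x‖₂ ≤ ε * ‖U₁ U₂ᵀ‖`. -/
theorem U1_U2_approx {n s : ℕ} (x : Fin s → ℝ) (U₁ U₂ : Matrix (Fin n) (Fin s) ℝ)
    (hinv : IsUnit (U₂.transpose * U₂).det) (ε : ℝ) (hε : ε ∈ Set.Ioo (0:ℝ) 1)
    (hx : x ⬝ᵥ ((U₂.transpose * U₂)⁻¹).mulVec x ≤ ε ^ 2) :
    vnorm (U₁.mulVec x) ≤ ε * spec (U₁ * U₂.transpose) := by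
  obtain ⟨w, hU₂w, hww⟩ := exists_transpose_mulVec_eq_dotProduct_self_eq U₂ hinv x
  have hw : vnorm w ≤ ε := by
    rw [vnorm_eq_sqrt_dotProduct, hww, ← Real.sqrt_sq hε.1.le]
    exact Real.sqrt_le_sqrt hx
  calc vnorm (U₁ *ᵥ x) = vnorm ((U₁ * U₂ᵀ) *ᵥ w) := by rw [← Matrix.mulVec_mulVec, hU₂w]
    _ ≤ spec (U₁ * U₂ᵀ) * vnorm w := vnorm_mulVec_le _ w
    _ ≤ spec (U₁ * U₂ᵀ) * ε := mul_le_mul_of_nonneg_left hw (spec_nonneg _)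
    _ = ε * spec (U₁ * U₂ᵀ) := mul_comm _ _
end

section
/- Let A ∈ ℝ^{n×d}, B ∈ ℝ^{n×m}, and let S ∈ ℝ^{n×s} be a random sampling matrix where each column independently equals (1/√(s p_i)) e_i with probability p_i, and suppose 1/p_i ≤ α · ‖A‖_F²/‖a_i‖₂² for all i (with a_i the i-th row of A). Then E[‖AᵀSSᵀB − AᵀB‖_F²] ≤ (α/s) · ‖A‖_F² · ‖B‖_F². -/
open scoped Matrix

/-- The sampling matrix determined by an assignment `z : Fin s → Fin n` of a sampled
index to each column: column `k` equals `(1/√(s·p_{z k})) e_{z k}`. -/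
noncomputable def sampMatrix {n s : ℕ} (p : Fin n → ℝ) (z : Fin s → Fin n) :
    Matrix (Fin n) (Fin s) ℝ :=
  fun i k => if z k = i then 1 / Real.sqrt (s * p (z k)) else 0

lemma sum_pi_prod {n s : ℕ} (h : Fin s → Fin n → ℝ) :
    ∑ z : Fin s → Fin n, ∏ k, h k (z k) = ∏ k, ∑ i, h k i := by
  rw [Finset.prod_univ_sum, Fintype.piFinset_univ]

lemma pair_term {n s : ℕ} (p q : Fin n → ℝ) (hp1 : ∑ i, p i = 1)
    (hq : ∑ i, p i * q i = 0) (k₁ k₂ : Fin s) :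
    ∑ z : Fin s → Fin n, (∏ k, p (z k)) * (q (z k₁) * q (z k₂))
      = if k₁ = k₂ then ∑ i, p i * q i ^ 2 else 0 := by
  have key : ∀ z : Fin s → Fin n,
      (∏ k, p (z k)) * (q (z k₁) * q (z k₂))
        = ∏ k, (p (z k) * ((if k = k₁ then q (z k) else 1) *
            (if k = k₂ then q (z k) else 1))) := by
    intro z
    rw [Finset.prod_mul_distrib, Finset.prod_mul_distrib]
    simp
  simp_rw [key]
  rw [sum_pi_prod (fun k i => p i * ((if k = k₁ then q i else 1) * if k = k₂ then q i else 1))]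
  by_cases hk : k₁ = k₂
  · subst hk
    simp only [if_pos rfl]
    have : ∀ k : Fin s, (∑ i, p i * ((if k = k₁ then q i else 1) *
        (if k = k₁ then q i else 1))) = if k = k₁ then ∑ i, p i * q i ^ 2 else 1 := by
      intro k
      by_cases h : k = k₁ <;> simp [h, hp1, sq, mul_assoc]
    simp_rw [this]
    simp
  · rw [if_neg hk]
    apply Finset.prod_eq_zero (Finset.mem_univ k₁)
    simp [hk, hq]

lemma variance_sum {n s : ℕ} (p q : Fin n → ℝ) (hp1 : ∑ i, p i = 1)
    (hq : ∑ i, p i * q i = 0) :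
    ∑ z : Fin s → Fin n, (∏ k, p (z k)) * (∑ k, q (z k))^2
      = s * ∑ i, p i * q i ^ 2 := by
  have expand : ∀ z : Fin s → Fin n,
      (∏ k, p (z k)) * (∑ k, q (z k))^2
        = ∑ k₁ : Fin s, ∑ k₂ : Fin s, (∏ k, p (z k)) * (q (z k₁) * q (z k₂)) := by
    intro z
    rw [sq, Finset.sum_mul_sum]
    rw [Finset.mul_sum]
    congr 1; ext k₁
    rw [Finset.mul_sum]
  simp_rw [expand]
  rw [Finset.sum_comm]
  have swap2 : ∀ k₁ : Fin s, (∑ z : Fin s → Fin n, ∑ k₂ : Fin s,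
      (∏ k, p (z k)) * (q (z k₁) * q (z k₂)))
      = ∑ k₂ : Fin s, ∑ z : Fin s → Fin n,
      (∏ k, p (z k)) * (q (z k₁) * q (z k₂)) := fun k₁ => Finset.sum_comm ..
  simp_rw [swap2, pair_term p q hp1 hq]
  simp [Finset.card_univ]

lemma AtSSB_entry {n s d m : ℕ} (p : Fin n → ℝ) (hp : ∀ i, 0 < p i)
    (A : Matrix (Fin n) (Fin d) ℝ) (B : Matrix (Fin n) (Fin m) ℝ)
    (z : Fin s → Fin n) (j : Fin d) (l : Fin m) :
    (A.transpose * sampMatrix p z * (sampMatrix p z).transpose * B) j l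
      = ∑ k, A (z k) j * B (z k) l / (s * p (z k)) := by
  simp only [Matrix.mul_apply, Matrix.transpose_apply, sampMatrix, mul_ite, ite_mul,
    mul_zero, zero_mul, Finset.sum_ite_eq, Finset.mem_univ, if_true]
  simp only [Finset.sum_mul, ite_mul, zero_mul]
  rw [Finset.sum_comm]
  refine Finset.sum_congr rfl fun k _ => ?_
  rw [Finset.sum_ite_eq Finset.univ (z k)]
  simp only [Finset.mem_univ, if_true]
  have hsp : (0:ℝ) ≤ s * p (z k) := mul_nonneg (Nat.cast_nonneg s) (hp _).le
  have h2 : 1 / Real.sqrt (↑s * p (z k)) * (1 / Real.sqrt (↑s * p (z k)))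
      = 1 / (↑s * p (z k)) := by
    rw [div_mul_div_comm, one_mul, Real.mul_self_sqrt hsp]
  rw [mul_assoc (A (z k) j), h2]
  ring

lemma frob_sq {a b : Type*} [Fintype a] [Fintype b] (M : Matrix a b ℝ) :
    frob M ^ 2 = ∑ i, ∑ j, (M i j)^2 :=
  Real.sq_sqrt (by positivity)

/-- For the random sampling matrix `S` with i.i.d. columns
`(1/√(s p_i)) e_i` chosen with probability `p_i`, if `1/p_i ≤ α‖A‖_F²/‖a_i‖₂²`
for all `i`, then `E[‖AᵀSSᵀB − AᵀB‖_F²] ≤ (α/s)‖A‖_F²‖B‖_F²`. -/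
theorem sampling_variance_bound {n s d m : ℕ} (hs : 0 < s)
    (p : Fin n → ℝ) (hp : ∀ i, 0 < p i) (hp1 : ∑ i, p i = 1)
    (A : Matrix (Fin n) (Fin d) ℝ) (B : Matrix (Fin n) (Fin m) ℝ)
    (α : ℝ) (hα : 1 ≤ α)
    (hpα : ∀ i, 1 / p i ≤ α * frob A ^ 2 / (∑ j, (A i j)^2)) :
    ∑ z : Fin s → Fin n, (∏ k, p (z k)) *
        frob (A.transpose * sampMatrix p z * (sampMatrix p z).transpose * B
              - A.transpose * B) ^ 2
      ≤ (α / s) * frob A ^ 2 * frob B ^ 2 := by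
  have hsR : (0:ℝ) < s := Nat.cast_pos.mpr hs
  set c : Fin d → Fin m → ℝ := fun j l => ∑ i, A i j * B i l with hc
  set q : Fin d → Fin m → Fin n → ℝ :=
    fun j l i => A i j * B i l / p i - c j l with hqdef
  have hpg : ∀ j l, ∑ i, p i * (A i j * B i l / p i) = c j l := by
    intro j l
    rw [hc]
    refine Finset.sum_congr rfl fun i _ => ?_
    rw [mul_comm, div_mul_cancel₀ _ (hp i).ne']
  have hq0 : ∀ j l, ∑ i, p i * q j l i = 0 := by
    intro j l
    simp only [hqdef, mul_sub]
    rw [Finset.sum_sub_distrib, hpg, ← Finset.sum_mul, hp1, one_mul, sub_self]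
  -- entrywise formula
  have entry : ∀ (z : Fin s → Fin n) j l,
      (A.transpose * sampMatrix p z * (sampMatrix p z).transpose * B
        - A.transpose * B) j l = (1/(s:ℝ)) * ∑ k, q j l (z k) := by
    intro z j l
    rw [Matrix.sub_apply, AtSSB_entry p hp A B z j l]
    have hAtB : (A.transpose * B) j l = c j l := by
      simp [Matrix.mul_apply, hc]
    rw [hAtB]
    have step : ∀ k : Fin s, (1/(s:ℝ)) * q j l (z k)
        = A (z k) j * B (z k) l / (s * p (z k)) - c j l / s := by
      intro k
      simp only [hqdef]
      have hpz := (hp (z k)).ne'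
      field_simp
    rw [Finset.mul_sum]
    simp_rw [step]
    rw [Finset.sum_sub_distrib, Finset.sum_const, Finset.card_univ, Fintype.card_fin,
      nsmul_eq_mul]
    congr 1
    field_simp
  -- rewrite the LHS using the variance identity
  have key : ∑ z : Fin s → Fin n, (∏ k, p (z k)) *
        frob (A.transpose * sampMatrix p z * (sampMatrix p z).transpose * B
              - A.transpose * B) ^ 2
      = (1/(s:ℝ)) * ∑ j, ∑ l, ∑ i, p i * q j l i ^ 2 := by
    have hz : ∀ z : Fin s → Fin n, (∏ k, p (z k)) *
        frob (A.transpose * sampMatrix p z * (sampMatrix p z).transpose * B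
              - A.transpose * B) ^ 2
        = ∑ j, ∑ l, (1/(s:ℝ))^2 * ((∏ k, p (z k)) * (∑ k, q j l (z k))^2) := by
      intro z
      rw [frob_sq]
      simp_rw [entry z, mul_pow]
      rw [Finset.mul_sum]
      refine Finset.sum_congr rfl fun j _ => ?_
      rw [Finset.mul_sum]
      refine Finset.sum_congr rfl fun l _ => ?_
      ring
    simp_rw [hz]
    rw [Finset.sum_comm]
    have swap2 : ∀ j : Fin d, (∑ z : Fin s → Fin n, ∑ l : Fin m,
        (1/(s:ℝ))^2 * ((∏ k, p (z k)) * (∑ k, q j l (z k))^2))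
        = ∑ l : Fin m, ∑ z : Fin s → Fin n,
        (1/(s:ℝ))^2 * ((∏ k, p (z k)) * (∑ k, q j l (z k))^2) :=
      fun j => Finset.sum_comm ..
    simp_rw [swap2]
    rw [Finset.mul_sum]
    refine Finset.sum_congr rfl fun j _ => ?_
    rw [Finset.mul_sum]
    refine Finset.sum_congr rfl fun l _ => ?_
    rw [← Finset.mul_sum, variance_sum p (q j l) hp1 (hq0 j l)]
    field_simp
  rw [key]
  -- variance ≤ second moment
  have var_le : ∀ j l, ∑ i, p i * q j l i ^ 2
      ≤ ∑ i, (A i j)^2 * (B i l)^2 / p i := by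
    intro j l
    have eq1 : ∑ i, p i * q j l i ^ 2
        = (∑ i, p i * (A i j * B i l / p i)^2) - (c j l)^2 := by
      have expand : ∀ i, p i * q j l i ^ 2
          = p i * (A i j * B i l / p i)^2
            - 2 * c j l * (p i * (A i j * B i l / p i)) + (c j l)^2 * p i := by
        intro i; simp only [hqdef]; ring
      simp_rw [expand]
      rw [Finset.sum_add_distrib, Finset.sum_sub_distrib, ← Finset.mul_sum,
        ← Finset.mul_sum, hpg, hp1]
      ring
    have eq2 : ∀ i, p i * (A i j * B i l / p i)^2 = (A i j)^2 * (B i l)^2 / p i := by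
      intro i
      have := (hp i).ne'
      field_simp
    rw [eq1]
    simp_rw [eq2]
    nlinarith [sq_nonneg (c j l)]
  -- row bound from hpα
  have hrow : ∀ i, (∑ j, (A i j)^2) / p i ≤ α * frob A ^ 2 := by
    intro i
    have h1 := hpα i
    have hpos : 0 < ∑ j, (A i j)^2 := by
      by_contra h
      push_neg at h
      have h0 : ∑ j, (A i j)^2 = 0 :=
        le_antisymm h (Finset.sum_nonneg fun _ _ => sq_nonneg _)
      rw [h0, div_zero] at h1
      exact absurd h1 (not_le.mpr (lt_of_lt_of_le (one_div_pos.mpr (hp i)) (le_of_eq rfl)))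
    rw [le_div_iff₀ hpos] at h1
    rw [div_le_iff₀ (hp i)]
    calc (∑ j, (A i j)^2) = (1 / p i) * (∑ j, (A i j)^2) * p i := by
          rw [mul_comm (1 / p i), mul_assoc, one_div, inv_mul_cancel₀ (hp i).ne', mul_one]
      _ ≤ α * frob A ^ 2 * p i := by
          apply mul_le_mul_of_nonneg_right h1 (hp i).le
  -- assemble the final bound
  have rearr : ∑ j, ∑ l, ∑ i, (A i j)^2 * (B i l)^2 / p i
      = ∑ i, ((∑ j, (A i j)^2) / p i) * (∑ l, (B i l)^2) := by
    have t1 : ∀ j : Fin d, (∑ l : Fin m, ∑ i : Fin n, (A i j)^2 * (B i l)^2 / p i)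
        = ∑ i : Fin n, ∑ l : Fin m, (A i j)^2 * (B i l)^2 / p i :=
      fun j => Finset.sum_comm ..
    simp_rw [t1]
    rw [Finset.sum_comm]
    refine Finset.sum_congr rfl fun i _ => ?_
    rw [div_mul_eq_mul_div, Finset.sum_mul_sum, Finset.sum_div]
    refine Finset.sum_congr rfl fun j _ => ?_
    rw [Finset.sum_div]
  have step1 : ∑ j, ∑ l, ∑ i, p i * q j l i ^ 2
      ≤ ∑ i, (α * frob A ^ 2) * (∑ l, (B i l)^2) := by
    calc ∑ j, ∑ l, ∑ i, p i * q j l i ^ 2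
        ≤ ∑ j, ∑ l, ∑ i, (A i j)^2 * (B i l)^2 / p i := by
          refine Finset.sum_le_sum fun j _ => Finset.sum_le_sum fun l _ => var_le j l
      _ = ∑ i, ((∑ j, (A i j)^2) / p i) * (∑ l, (B i l)^2) := rearr
      _ ≤ ∑ i, (α * frob A ^ 2) * (∑ l, (B i l)^2) := by
          refine Finset.sum_le_sum fun i _ => ?_
          exact mul_le_mul_of_nonneg_right (hrow i)
            (Finset.sum_nonneg fun _ _ => sq_nonneg _)
  have hBfrob : ∑ i, (α * frob A ^ 2) * (∑ l, (B i l)^2)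
      = α * frob A ^ 2 * frob B ^ 2 := by
    rw [← Finset.mul_sum, frob_sq B]
  calc (1/(s:ℝ)) * ∑ j, ∑ l, ∑ i, p i * q j l i ^ 2
      ≤ (1/(s:ℝ)) * (α * frob A ^ 2 * frob B ^ 2) := by
        apply mul_le_mul_of_nonneg_left _ (by positivity)
        rw [← hBfrob]; exact step1
    _ = (α / s) * frob A ^ 2 * frob B ^ 2 := by ring
end

section
/- Let Q, K ∈ ℝ^{n×d}, let E ∈ ℝ^{2n×2n} be the exponential kernel matrix over the combined dataset of rows of Q followed by rows of K (E_{i,j} = exp(⟨x_i, x_j⟩)), and suppose Ẽ ∈ ℝ^{2n×2n} satisfies E ⪯ Ẽ ⪯ E + λI for some λ > 0. Then the top-right n×n block Ã of Ẽ satisfies ‖Ã − exp(QKᵀ)‖ ≤ λ and ‖Ã − exp(QKᵀ)‖_F ≤ λ√n, where exp(QKᵀ) is the entrywise exponential of QKᵀ. -/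
/-!
Put `D = Ẽ - E`, so that `0 ⪯ D ⪯ λI`. By Cauchy–Schwarz for the semi-inner product
`(u, v) ↦ uᵀ D v`, `‖D v‖⁴ = ((Dv)ᵀ D v)² ≤ ((Dv)ᵀ D (Dv)) (vᵀ D v) ≤ λ² ‖D v‖² ‖v‖²`, so
`‖D‖ ≤ λ`. The error `Ã − exp(QKᵀ)` is exactly the top-right block of `D`, whose spectral norm is
at most `‖D‖`, and a matrix with `n` columns, each of length at most its spectral norm, has
Frobenius norm at most `√n` times its spectral norm.
-/

open scoped Matrix

namespace Matrix

variable {ι : Type*} [Fintype ι]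

theorem PosSemidef.dotProduct_mulVec_sq_le {D : Matrix ι ι ℝ} (hD : D.PosSemidef)
    (u v : ι → ℝ) : (u ⬝ᵥ D *ᵥ v) ^ 2 ≤ (u ⬝ᵥ D *ᵥ u) * (v ⬝ᵥ D *ᵥ v) := by
  let := D.toSeminormedAddCommGroup hD
  let := D.toInnerProductSpace hD
  have h := real_inner_mul_inner_self_le u v
  -- the inner product induced by `D` is `⟪u, v⟫ = D *ᵥ v ⬝ᵥ u`
  change (D *ᵥ v ⬝ᵥ u) * (D *ᵥ v ⬝ᵥ u) ≤ (D *ᵥ u ⬝ᵥ u) * (D *ᵥ v ⬝ᵥ v) at h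
  simpa only [sq, dotProduct_comm] using h

theorem PosSemidef.mulVec_dotProduct_self_le [DecidableEq ι] {D : Matrix ι ι ℝ} {c : ℝ}
    (hD : D.PosSemidef) (hDc : (c • 1 - D).PosSemidef) (v : ι → ℝ) :
    D *ᵥ v ⬝ᵥ D *ᵥ v ≤ c ^ 2 * (v ⬝ᵥ v) := by
  have hquad (u : ι → ℝ) : u ⬝ᵥ D *ᵥ u ≤ c * (u ⬝ᵥ u) := by
    have := hDc.dotProduct_mulVec_nonneg u
    simp only [star_trivial, sub_mulVec, smul_mulVec, one_mulVec, dotProduct_sub,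
      dotProduct_smul, smul_eq_mul] at this
    linarith
  set w := D *ᵥ v
  have hw : 0 ≤ w ⬝ᵥ w := dotProduct_self_star_nonneg w
  have hDv : 0 ≤ v ⬝ᵥ D *ᵥ v := by simpa using hD.dotProduct_mulVec_nonneg v
  have hDw : 0 ≤ w ⬝ᵥ D *ᵥ w := by simpa using hD.dotProduct_mulVec_nonneg w
  have hww : (w ⬝ᵥ w) ^ 2 ≤ (w ⬝ᵥ w) * (c ^ 2 * (v ⬝ᵥ v)) := calc
    (w ⬝ᵥ w) ^ 2 ≤ (w ⬝ᵥ D *ᵥ w) * (v ⬝ᵥ D *ᵥ v) := hD.dotProduct_mulVec_sq_le w v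
    _ ≤ (c * (w ⬝ᵥ w)) * (c * (v ⬝ᵥ v)) :=
      mul_le_mul (hquad w) (hquad v) hDv (hDw.trans (hquad w))
    _ = (w ⬝ᵥ w) * (c ^ 2 * (v ⬝ᵥ v)) := by ring
  rcases hw.eq_or_lt with h0 | hpos
  · rw [← h0]
    exact mul_nonneg (sq_nonneg c) (dotProduct_self_star_nonneg v)
  · rw [sq] at hww
    exact le_of_mul_le_mul_left hww hpos

end Matrix

section OperatorNorm

theorem EuclideanSpace.norm_toLp_sq {n : Type*} [Fintype n] (v : n → ℝ) :
    ‖WithLp.toLp 2 v‖ ^ 2 = v ⬝ᵥ v := by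
  rw [← real_inner_self_eq_norm_sq, EuclideanSpace.inner_eq_star_dotProduct]
  rfl

variable {m n : Type*} [Fintype m] [Fintype n] [DecidableEq n]

theorem mulVec_dotProduct_self_le_spec_sq (A : Matrix m n ℝ) (x : n → ℝ) :
    A *ᵥ x ⬝ᵥ A *ᵥ x ≤ spec A ^ 2 * (x ⬝ᵥ x) := by
  rw [← EuclideanSpace.norm_toLp_sq, ← EuclideanSpace.norm_toLp_sq, ← mul_pow]
  gcongr
  exact (Matrix.toEuclideanLin A).toContinuousLinearMap.le_opNorm (WithLp.toLp 2 x)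

theorem spec_le_of_forall_mulVec_dotProduct_self_le {A : Matrix m n ℝ} {c : ℝ} (hc : 0 ≤ c)
    (h : ∀ x, A *ᵥ x ⬝ᵥ A *ᵥ x ≤ c ^ 2 * (x ⬝ᵥ x)) : spec A ≤ c := by
  refine ContinuousLinearMap.opNorm_le_bound _ hc fun x => ?_
  rw [← pow_le_pow_iff_left₀ (norm_nonneg _) (by positivity) two_ne_zero, mul_pow]
  have hx := h x.ofLp
  rw [← EuclideanSpace.norm_toLp_sq, ← EuclideanSpace.norm_toLp_sq] at hx
  exact hx

theorem spec_le_of_posSemidef {D : Matrix n n ℝ} {c : ℝ} (hc : 0 ≤ c) (hD : D.PosSemidef)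
    (hDc : (c • 1 - D).PosSemidef) : spec D ≤ c :=
  spec_le_of_forall_mulVec_dotProduct_self_le hc (hD.mulVec_dotProduct_self_le hDc)

theorem spec_toBlocks₁₂_le {o p : Type*} [Fintype o] [Fintype p] [DecidableEq p]
    (A : Matrix (m ⊕ o) (n ⊕ p) ℝ) : spec A.toBlocks₁₂ ≤ spec A := by
  refine spec_le_of_forall_mulVec_dotProduct_self_le (norm_nonneg _) fun x => ?_
  have h := mulVec_dotProduct_self_le_spec_sq A (Sum.elim 0 x)
  rw [← A.fromBlocks_toBlocks, Matrix.fromBlocks_mulVec] at h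
  simp only [Matrix.fromBlocks_toBlocks, Sum.elim_comp_inl, Sum.elim_comp_inr, Matrix.mulVec_zero,
    zero_add, sumElim_dotProduct_sumElim, zero_dotProduct] at h
  have h₂₂ : 0 ≤ A.toBlocks₂₂ *ᵥ x ⬝ᵥ A.toBlocks₂₂ *ᵥ x := dotProduct_self_star_nonneg _
  linarith

theorem frob_le_sqrt_card_mul_spec (A : Matrix m n ℝ) :
    frob A ≤ Real.sqrt (Fintype.card n) * spec A := by
  have hcol (j : n) : ∑ i, A i j ^ 2 ≤ spec A ^ 2 := by
    simpa [Matrix.mulVec_single_one, dotProduct, sq, Pi.single_apply] using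
      mulVec_dotProduct_self_le_spec_sq A (Pi.single j 1)
  have hA : 0 ≤ spec A := norm_nonneg _
  rw [frob, ← Real.sqrt_sq hA, ← Real.sqrt_mul (Nat.cast_nonneg _)]
  gcongr
  calc ∑ i, ∑ j, A i j ^ 2 = ∑ j, ∑ i, A i j ^ 2 := Finset.sum_comm
    _ ≤ ∑ _j : n, spec A ^ 2 := Finset.sum_le_sum fun j _ => hcol j
    _ = Fintype.card n * spec A ^ 2 := by
      rw [Finset.sum_const, Finset.card_univ, nsmul_eq_mul]

end OperatorNorm

/-- Let `E ∈ ℝ^{2n×2n}` be the exponential kernel matrix over the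
rows of `Q` followed by the rows of `K`, and suppose `E ⪯ Ẽ ⪯ E + λI` for `λ > 0`.
Then the top-right `n×n` block `Ã` of `Ẽ` satisfies
`‖Ã − exp(QKᵀ)‖ ≤ λ` and `‖Ã − exp(QKᵀ)‖_F ≤ λ√n`, where `exp(QKᵀ)` is the
entrywise exponential. -/
theorem attention_block_approx {n d : ℕ} (Q K : Matrix (Fin n) (Fin d) ℝ)
    (E Etil : Matrix (Fin n ⊕ Fin n) (Fin n ⊕ Fin n) ℝ)
    (hEdef : ∀ i j, E i j =
      Real.exp ((Sum.elim (fun i => Q i) (fun i => K i) i) ⬝ᵥ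
                 (Sum.elim (fun i => Q i) (fun i => K i) j)))
    (lam : ℝ) (hlam : 0 < lam)
    (hlow : (Etil - E).PosSemidef)
    (hup : (E + lam • (1 : Matrix (Fin n ⊕ Fin n) (Fin n ⊕ Fin n) ℝ) - Etil).PosSemidef) :
    spec (fun i j => Etil (Sum.inl i) (Sum.inr j) - Real.exp (Q i ⬝ᵥ K j)) ≤ lam ∧
    frob (fun i j => Etil (Sum.inl i) (Sum.inr j) - Real.exp (Q i ⬝ᵥ K j))
      ≤ lam * Real.sqrt n := by
  have hblock : (fun i j => Etil (Sum.inl i) (Sum.inr j) - Real.exp (Q i ⬝ᵥ K j)) =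
      (Etil - E).toBlocks₁₂ := by
    ext i j
    simp [Matrix.toBlocks₁₂, hEdef]
  have hup' : (lam • 1 - (Etil - E)).PosSemidef := by
    convert hup using 1
    abel
  have hspec : spec (Etil - E).toBlocks₁₂ ≤ lam :=
    (spec_toBlocks₁₂_le _).trans (spec_le_of_posSemidef hlam.le hlow hup')
  rw [hblock]
  refine ⟨hspec, ?_⟩
  calc frob (Etil - E).toBlocks₁₂
      ≤ Real.sqrt (Fintype.card (Fin n)) * spec (Etil - E).toBlocks₁₂ :=
        frob_le_sqrt_card_mul_spec _
    _ ≤ lam * Real.sqrt n := by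
      rw [Fintype.card_fin, mul_comm]
      gcongr
end
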